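/- arXiv:1807.04436 — 2 statements merged into one kernel-verified Lean document; each statement's English description precedes it below -/
import Mathlib

section
/- Decomposition of points in a sector along a steeper ray: Let 0 ≤ θ' < θ'' < π/2, let T > 0, and let t ∈ ℂ satisfy Re t = T and 0 ≤ arg t ≤ θ'. Set κ = 1 − tan θ'/tan θ''. Then there exists a real number t₁ with κT ≤ t₁ ≤ T such that t = t₁ + |t − t₁| e^{iθ''}. -/
/-!
The ray of angle `θ''` through `t` meets the real axis at `t₁ = Re t - Im t / tan θ''`, and
`t - t₁ = (Im t / sin θ'') e^{iθ''}` with a nonnegative real coefficient, which is therefore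
`|t - t₁|`. The bounds on `t₁` come from `0 ≤ Im t ≤ T tan θ'`, i.e. from monotonicity of `tan`.
-/

open Real

theorem Complex.eq_norm_mul_of_eq_ofReal_mul {z w : ℂ} {r : ℝ} (hr : 0 ≤ r) (hw : ‖w‖ = 1)
    (h : z = r * w) : z = ‖z‖ * w := by
  rw [h, norm_mul, hw, mul_one, Complex.norm_real, Real.norm_of_nonneg hr]

-- Also valid at `θ = π/2`, where the junk value `tan (π/2) = 0` gives the correct foot `t.re`.
theorem Complex.sub_ofReal_re_sub_im_div_tan {θ : ℝ} (hθ : Real.sin θ ≠ 0) (t : ℂ) :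
    t - ((t.re - t.im / Real.tan θ : ℝ) : ℂ) =
      ((t.im / Real.sin θ : ℝ) : ℂ) * Complex.exp (θ * Complex.I) := by
  rw [Real.tan_eq_sin_div_cos]
  apply Complex.ext <;>
    simp only [Complex.sub_re, Complex.sub_im, Complex.re_ofReal_mul, Complex.im_ofReal_mul,
      Complex.exp_ofReal_mul_I_re, Complex.exp_ofReal_mul_I_im, Complex.ofReal_re,
      Complex.ofReal_im] <;>
    field_simp <;> ring

theorem Complex.eq_ofReal_add_norm_mul_exp {θ : ℝ} (hθ : 0 < Real.sin θ) {t : ℂ} (ht : 0 ≤ t.im) :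
    t = ((t.re - t.im / Real.tan θ : ℝ) : ℂ) +
      ‖t - ((t.re - t.im / Real.tan θ : ℝ) : ℂ)‖ * Complex.exp (θ * Complex.I) := by
  rw [← Complex.eq_norm_mul_of_eq_ofReal_mul (div_nonneg ht hθ.le)
    (Complex.norm_exp_ofReal_mul_I θ) (Complex.sub_ofReal_re_sub_im_div_tan hθ.ne' t)]
  ring

theorem Complex.im_le_re_mul_tan_of_arg_le {t : ℂ} {θ : ℝ} (hre : 0 < t.re) (harg : t.arg ≤ θ)
    (hθ : θ < π / 2) : t.im ≤ t.re * Real.tan θ := by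
  have hmem : t.arg ∈ Set.Ioo (-(π / 2)) (π / 2) :=
    abs_lt.mp (Complex.abs_arg_lt_pi_div_two_iff.mpr (Or.inl hre))
  have htan : t.im / t.re ≤ Real.tan θ := by
    rw [← Complex.tan_arg]
    exact strictMonoOn_tan.monotoneOn hmem ⟨by linarith [hmem.1], hθ⟩ harg
  rwa [div_le_iff₀' hre] at htan

theorem sector_point_decomposition_general
    (θ' θ'' : ℝ) (hθ : θ' < θ'') (hθ'' : θ'' < π / 2)
    (T : ℝ) (hT : 0 < T) (t : ℂ) (hre : t.re = T)
    (harg0 : 0 ≤ Complex.arg t) (harg1 : Complex.arg t ≤ θ') :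
    ∃ t₁ : ℝ, (1 - Real.tan θ' / Real.tan θ'') * T ≤ t₁ ∧ t₁ ≤ T ∧
      t = (t₁ : ℂ) + (‖t - (t₁ : ℂ)‖ : ℂ) * Complex.exp ((θ'' : ℂ) * Complex.I) := by
  have hθ''0 : 0 < θ'' := by linarith
  have htan : 0 < tan θ'' := tan_pos_of_pos_of_lt_pi_div_two hθ''0 hθ''
  have him : 0 ≤ t.im := Complex.arg_nonneg_iff.mp harg0
  have him_le : t.im ≤ T * tan θ' :=
    hre ▸ Complex.im_le_re_mul_tan_of_arg_le (hre ▸ hT) harg1 (by linarith)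
  refine ⟨t.re - t.im / tan θ'', ?_, ?_, ?_⟩
  · rw [hre, one_sub_mul, div_mul_eq_mul_div, mul_comm]
    exact sub_le_sub_left (div_le_div_of_nonneg_right him_le htan.le) T
  · rw [hre]; exact sub_le_self T (div_nonneg him htan.le)
  · exact Complex.eq_ofReal_add_norm_mul_exp (sin_pos_of_pos_of_lt_pi hθ''0 (by linarith)) him

/-- **Decomposition of points in a sector along a steeper ray** (proof of Proposition 5.5):
if `0 ≤ θ' < θ'' < π/2`, `T > 0`, `Re t = T` and `0 ≤ arg t ≤ θ'`, then with
`κ = 1 − tan θ'/tan θ''` there is `t₁ ∈ [κT, T]` with `t = t₁ + |t − t₁| e^{iθ''}`. -/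
theorem sector_point_decomposition
    (θ' θ'' : ℝ) (hθ'0 : 0 ≤ θ') (hθ : θ' < θ'') (hθ'' : θ'' < π / 2)
    (T : ℝ) (hT : 0 < T) (t : ℂ) (hre : t.re = T)
    (harg0 : 0 ≤ Complex.arg t) (harg1 : Complex.arg t ≤ θ') :
    ∃ t₁ : ℝ, (1 - Real.tan θ' / Real.tan θ'') * T ≤ t₁ ∧ t₁ ≤ T ∧
      t = (t₁ : ℂ) + (‖t - (t₁ : ℂ)‖ : ℂ) * Complex.exp ((θ'' : ℂ) * Complex.I) :=
  sector_point_decomposition_general θ' θ'' hθ hθ'' T hT t hre harg0 harg1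
end

section
/- Improved decay of boundary layer potentials with zero spatial mean in two dimensions: Let R₀ > 0 and let K ⊆ {y ∈ ℝ² : |y| ≤ R₀} be compact with ℋ¹(K) < ∞, where ℋ¹ is one-dimensional Hausdorff measure. Let C₀ > 0 and let W : (ℝ²∖{0}) × (0,∞) → ℝ^{2×2} be continuously differentiable in its first variable with |∇_z W(z,τ)| ≤ C₀ (|z| + √τ)^{−3} for all z ≠ 0 and τ > 0. Let t > 0 and let g : K × (0,t) → ℝ² be bounded and measurable with ∫_K g(y,s) dℋ¹(y) = 0 for every s ∈ (0,t). Then for every x ∈ ℝ² with |x| ≥ 2R₀, | ∫_0^t ∫_K W(x−y, t−s) g(y,s) dℋ¹(y) ds | ≤ 2 C₀ R₀ ℋ¹(K) (sup_{K×(0,t)} |g|) / |x|. -/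
/-!
Since `g(·, s)` has mean zero, the kernel `W(x - y, τ)` may be replaced by
`W(x - y, τ) - W(x, τ)`. For `|y| ≤ R₀ ≤ |x|/2` the segment from `x - y` to `x` stays in
`{|z| ≥ |x|/2}`, so the mean value inequality bounds this difference by
`C₀ R₀ (|x|/2 + √τ)⁻³`, and `∫₀^∞ (a + √τ)⁻³ dτ = 1/a` gives the factor `2/|x|`.
-/

open MeasureTheory Real
open scoped RealInnerProductSpace ENNReal NNReal Topology

noncomputable section

abbrev Euc (n : ℕ) := EuclideanSpace ℝ (Fin n)

def ebasis (n : ℕ) (i : Fin n) : Euc n := EuclideanSpace.single i 1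

/-- Spatial divergence of a vector field. -/
def sdiv {n : ℕ} (f : Euc n → Euc n) (x : Euc n) : ℝ :=
  ∑ i, fderiv ℝ f x (ebasis n i) i

/-- Laplacian of a map into a normed space. -/
def slap {n : ℕ} {F : Type*} [NormedAddCommGroup F] [NormedSpace ℝ F]
    (f : Euc n → F) (x : Euc n) : F :=
  ∑ i, fderiv ℝ (fun y => fderiv ℝ f y (ebasis n i)) x (ebasis n i)

/-- Exterior domain with `C³` boundary. -/
def IsExteriorDomainC3 {n : ℕ} (Ω : Set (Euc n)) : Prop :=
  IsOpen Ω ∧ IsCompact Ωᶜ ∧ Ωᶜ.Nonempty ∧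
  ∀ x ∈ frontier Ω, ∃ ε > 0, ∃ ρ : Euc n → ℝ, ContDiff ℝ 3 ρ ∧
    (∀ y ∈ Metric.ball x ε, fderiv ℝ ρ y ≠ 0) ∧
    Ω ∩ Metric.ball x ε = {y ∈ Metric.ball x ε | ρ y < 0} ∧
    frontier Ω ∩ Metric.ball x ε = {y ∈ Metric.ball x ε | ρ y = 0}

/-- A vector field `φ(x,t)` of class `C^{2,1}`: `φ`, `∂ₜφ`, `∇φ`, `∇²φ` exist and are
continuous (jointly in `(x,t)`). -/
def IsC21 {n : ℕ} (φ : Euc n → ℝ → Euc n) : Prop :=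
  Continuous (fun p : Euc n × ℝ => φ p.1 p.2) ∧
  (∀ x, Differentiable ℝ (fun s => φ x s)) ∧
  Continuous (fun p : Euc n × ℝ => deriv (fun s => φ p.1 s) p.2) ∧
  (∀ t, Differentiable ℝ (fun y => φ y t)) ∧
  Continuous (fun p : Euc n × ℝ => fderiv ℝ (fun y => φ y p.2) p.1) ∧
  (∀ t, Differentiable ℝ (fun y => fderiv ℝ (fun z => φ z t) y)) ∧
  Continuous (fun p : Euc n × ℝ => fderiv ℝ (fun y => fderiv ℝ (fun z => φ z p.2) y) p.1)

lemma integral_inv_add_sqrt_pow_three_le {a : ℝ} (ha : 0 < a) {t : ℝ} (ht : 0 ≤ t) :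
    ∫ τ in (0:ℝ)..t, ((a + √τ) ^ 3)⁻¹ ≤ 1 / a := by
  set F : ℝ → ℝ := fun τ => a / (a + √τ) ^ 2 - 2 / (a + √τ) with hF
  have hpos : ∀ τ : ℝ, 0 < a + √τ := fun τ => by positivity
  have hFcont : Continuous F :=
    (continuous_const.div (by fun_prop) fun τ => by positivity).sub
      (continuous_const.div (by fun_prop) fun τ => by positivity)
  have hderiv : ∀ τ ∈ Set.Ioo (0:ℝ) t, HasDerivAt F ((a + √τ) ^ 3)⁻¹ τ := by
    intro τ hτ
    have hsqrt : √τ ≠ 0 := (Real.sqrt_pos.mpr hτ.1).ne'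
    have hu : HasDerivAt (fun τ => a + √τ) (1 / (2 * √τ)) τ := by
      simpa using (Real.hasDerivAt_sqrt hτ.1.ne').const_add a
    refine (((hasDerivAt_const τ a).div (hu.pow 2) (pow_ne_zero 2 (hpos τ).ne')).sub
      ((hasDerivAt_const τ 2).div hu (hpos τ).ne')).congr_deriv ?_
    simp only [Pi.pow_apply]
    field_simp
    ring
  have hcont : Continuous fun τ : ℝ => ((a + √τ) ^ 3)⁻¹ :=
    Continuous.inv₀ (by fun_prop) fun τ => by positivity
  rw [intervalIntegral.integral_eq_sub_of_hasDeriv_right_of_le ht hFcont.continuousOn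
    (fun τ hτ => (hderiv τ hτ).hasDerivWithinAt) (hcont.intervalIntegrable 0 t)]
  have hF0 : F 0 = -(1 / a) := by
    simp only [hF, Real.sqrt_zero, add_zero]
    field_simp
    ring
  have hFt : F t ≤ 0 := by
    rw [hF, sub_nonpos, div_le_div_iff₀ (by positivity) (hpos t)]
    nlinarith [Real.sqrt_nonneg t]
  linarith

lemma norm_setIntegral_Ioo_le_of_norm_le_inv_add_sqrt_pow_three {E : Type*} [NormedAddCommGroup E]
    [NormedSpace ℝ E] {F : ℝ → E} {a c t : ℝ} (ha : 0 < a) (ht : 0 < t)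
    (hF : ∀ s ∈ Set.Ioo 0 t, ‖F s‖ ≤ c * ((a + √(t - s)) ^ 3)⁻¹) :
    ‖∫ s in Set.Ioo 0 t, F s‖ ≤ c / a := by
  have hc : 0 ≤ c := by
    have h := (norm_nonneg _).trans (hF (t / 2) ⟨by linarith, by linarith⟩)
    exact nonneg_of_mul_nonneg_left h (by positivity)
  have hbound : Continuous fun s : ℝ => ((a + √(t - s)) ^ 3)⁻¹ :=
    Continuous.inv₀ (by fun_prop) fun s => by positivity
  have htime : ∫ s in Set.Ioo 0 t, ((a + √(t - s)) ^ 3)⁻¹ ≤ 1 / a := by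
    rw [integral_Ioc_eq_integral_Ioo.symm, ← intervalIntegral.integral_of_le ht.le,
      intervalIntegral.integral_comp_sub_left (fun τ => ((a + √τ) ^ 3)⁻¹) t, sub_self, sub_zero]
    exact integral_inv_add_sqrt_pow_three_le ha ht.le
  calc ‖∫ s in Set.Ioo 0 t, F s‖
      ≤ ∫ s in Set.Ioo 0 t, c * ((a + √(t - s)) ^ 3)⁻¹ :=
        norm_integral_le_of_norm_le
          ((hbound.integrableOn_Icc.mono_set Set.Ioo_subset_Icc_self).const_mul c)
          (ae_restrict_of_forall_mem measurableSet_Ioo hF)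
    _ = c * ∫ s in Set.Ioo 0 t, ((a + √(t - s)) ^ 3)⁻¹ := integral_const_mul _ _
    _ ≤ c * (1 / a) := mul_le_mul_of_nonneg_left htime hc
    _ = c / a := mul_one_div c a

lemma rpow_neg_three_le_inv_pow_three {a r b : ℝ} (ha : 0 < a) (har : a ≤ r) (hb : 0 ≤ b) :
    (r + b) ^ (-(3:ℝ)) ≤ ((a + b) ^ 3)⁻¹ := by
  rw [rpow_neg (by linarith)]
  norm_cast
  gcongr

section
variable {E F : Type*} [NormedAddCommGroup E] [NormedSpace ℝ E] [NormedAddCommGroup F]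
  [NormedSpace ℝ F]

lemma norm_image_sub_le_of_norm_fderiv_le_off_ball {f : E → F} {a B r : ℝ}
    (hfd : ∀ z, a ≤ ‖z‖ → DifferentiableAt ℝ f z) (hfB : ∀ z, a ≤ ‖z‖ → ‖fderiv ℝ f z‖ ≤ B)
    {x y : E} (hy : ‖y‖ ≤ r) (hx : a + r ≤ ‖x‖) :
    ‖f (x - y) - f x‖ ≤ B * r := by
  have hball : ∀ z ∈ Metric.closedBall x r, a ≤ ‖z‖ := fun z hz => by
    have := norm_sub_norm_le x z
    rw [← dist_eq_norm, dist_comm] at this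
    linarith [Metric.mem_closedBall.mp hz]
  have hB : 0 ≤ B := (norm_nonneg _).trans (hfB x (by linarith [(norm_nonneg y).trans hy]))
  have hmem : x - y ∈ Metric.closedBall x r := by simpa [dist_eq_norm] using hy
  calc ‖f (x - y) - f x‖ ≤ B * ‖(x - y) - x‖ :=
        (convex_closedBall x r).norm_image_sub_le_of_norm_fderiv_le
          (fun z hz => hfd z (hball z hz)) (fun z hz => hfB z (hball z hz))
          (Metric.mem_closedBall_self ((norm_nonneg y).trans hy)) hmem
    _ ≤ B * r := by
        rw [sub_sub_cancel_left, norm_neg]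
        exact mul_le_mul_of_nonneg_left hy hB

end

section
variable {α H F : Type*} [MeasurableSpace α] {μ : Measure α} [NormedAddCommGroup H]
  [NormedSpace ℝ H] [CompleteSpace H] [NormedAddCommGroup F] [NormedSpace ℝ F] [CompleteSpace F]

lemma norm_setIntegral_apply_le_of_integral_eq_zero {s : Set α} (hs : MeasurableSet s)
    (hμs : μ s < ⊤) {A : α → H →L[ℝ] F} (hA : AEStronglyMeasurable A (μ.restrict s))
    {A₀ : H →L[ℝ] F} {L : ℝ} (hAL : ∀ y ∈ s, ‖A y - A₀‖ ≤ L)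
    {g : α → H} (hg : AEStronglyMeasurable g (μ.restrict s)) {G : ℝ} (hgG : ∀ y ∈ s, ‖g y‖ ≤ G)
    (hmean : ∫ y in s, g y ∂μ = 0) :
    ‖∫ y in s, A y (g y) ∂μ‖ ≤ L * G * μ.real s := by
  have hbound : ∀ y ∈ s, ‖(A y - A₀) (g y)‖ ≤ L * G := fun y hy =>
    ((A y - A₀).le_opNorm (g y)).trans <|
      mul_le_mul (hAL y hy) (hgG y hy) (norm_nonneg _) ((norm_nonneg _).trans (hAL y hy))
  have hgint : IntegrableOn g s μ :=
    ⟨hg, .restrict_of_bounded G hμs (ae_restrict_of_forall_mem hs hgG)⟩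
  have hdiff : IntegrableOn (fun y => (A y - A₀) (g y)) s μ :=
    ⟨isBoundedBilinearMap_apply.continuous.comp_aestronglyMeasurable
      ((hA.sub aestronglyMeasurable_const).prodMk hg),
      .restrict_of_bounded (L * G) hμs (ae_restrict_of_forall_mem hs hbound)⟩
  have hsplit : ∫ y in s, A y (g y) ∂μ = ∫ y in s, (A y - A₀) (g y) ∂μ := by
    have hconst : ∫ y in s, A₀ (g y) ∂μ = 0 := by
      rw [A₀.integral_comp_comm hgint, hmean, map_zero]
    rw [← add_zero (∫ y in s, (A y - A₀) (g y) ∂μ), ← hconst,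
      ← integral_add hdiff (A₀.integrable_comp hgint)]
    simp only [sub_apply, sub_add_cancel]
  rw [hsplit]
  exact norm_setIntegral_le_of_norm_le_const hμs hbound

end

section
variable {E H F : Type*} [NormedAddCommGroup E] [NormedSpace ℝ E] [MeasurableSpace E]
  [BorelSpace E] [SecondCountableTopology E] {μ : Measure E} [NormedAddCommGroup H]
  [NormedSpace ℝ H] [CompleteSpace H] [NormedAddCommGroup F] [NormedSpace ℝ F] [CompleteSpace F]

lemma norm_setIntegral_apply_sub_le_of_integral_eq_zero {K : Set E} (hK : MeasurableSet K)
    (hμK : μ K < ⊤) {R : ℝ} (hKR : ∀ y ∈ K, ‖y‖ ≤ R) {V : E → H →L[ℝ] F} {a B : ℝ}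
    (hVd : ∀ z, a ≤ ‖z‖ → DifferentiableAt ℝ V z) (hVB : ∀ z, a ≤ ‖z‖ → ‖fderiv ℝ V z‖ ≤ B)
    {x : E} (hx : a + R ≤ ‖x‖) {g : E → H} (hg : AEStronglyMeasurable g (μ.restrict K))
    {G : ℝ} (hgG : ∀ y ∈ K, ‖g y‖ ≤ G) (hmean : ∫ y in K, g y ∂μ = 0) :
    ‖∫ y in K, V (x - y) (g y) ∂μ‖ ≤ B * R * G * μ.real K := by
  have hVcont : ContinuousOn (fun y => V (x - y)) K := fun y hy =>
    have hxy : a ≤ ‖x - y‖ := by linarith [norm_sub_norm_le x y, hKR y hy]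
    ((hVd _ hxy).continuousAt.comp (continuousAt_const.sub continuousAt_id)).continuousWithinAt
  exact norm_setIntegral_apply_le_of_integral_eq_zero hK hμK (hVcont.aestronglyMeasurable hK)
    (fun y hy => norm_image_sub_le_of_norm_fderiv_le_off_ball hVd hVB (hKR y hy) hx) hg hgG hmean

end

theorem layer_potential_zero_mean_decay_2d_general
    (R₀ : ℝ) (hR₀ : 0 < R₀) (K : Set (Euc 2)) (hK : IsCompact K)
    (hKR : ∀ y ∈ K, ‖y‖ ≤ R₀) (hH : μH[(1:ℝ)] K < ⊤)
    (C₀ : ℝ) (hC₀ : 0 < C₀)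
    (W : Euc 2 → ℝ → (Euc 2 →L[ℝ] Euc 2))
    (hWdiff : ∀ τ : ℝ, 0 < τ → ∀ z : Euc 2, z ≠ 0 → DifferentiableAt ℝ (fun z' => W z' τ) z)
    (hWbound : ∀ τ : ℝ, 0 < τ → ∀ z : Euc 2, z ≠ 0 →
      ‖fderiv ℝ (fun z' => W z' τ) z‖ ≤ C₀ * (‖z‖ + Real.sqrt τ) ^ (-(3:ℝ)))
    (t : ℝ) (ht : 0 < t) (g : Euc 2 → ℝ → Euc 2)
    (hgmeas : Measurable (fun pt : Euc 2 × ℝ => g pt.1 pt.2))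
    (G : ℝ) (hgbdd : ∀ y ∈ K, ∀ s ∈ Set.Ioo (0:ℝ) t, ‖g y s‖ ≤ G)
    (hgmean : ∀ s ∈ Set.Ioo (0:ℝ) t, ∫ y in K, g y s ∂(μH[(1:ℝ)]) = 0)
    (x : Euc 2) (hx : 2 * R₀ ≤ ‖x‖) :
    ‖∫ s in Set.Ioo (0:ℝ) t, (∫ y in K, (W (x - y) (t - s)) (g y s) ∂(μH[(1:ℝ)])) ∂volume‖
      ≤ 2 * C₀ * R₀ * (μH[(1:ℝ)] K).toReal * G / ‖x‖ := by
  set a := ‖x‖ / 2 with ha_def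
  have ha : 0 < a := by linarith
  calc _ ≤ C₀ * R₀ * G * (μH[(1:ℝ)] K).toReal / a := by
        refine norm_setIntegral_Ioo_le_of_norm_le_inv_add_sqrt_pow_three ha ht fun s hs => ?_
        have hτ : 0 < t - s := sub_pos.mpr hs.2
        have hne : ∀ z : Euc 2, a ≤ ‖z‖ → z ≠ 0 := fun z hz => norm_pos_iff.mp (ha.trans_le hz)
        have hkernel : ∀ z : Euc 2, a ≤ ‖z‖ →
            ‖fderiv ℝ (fun z' => W z' (t - s)) z‖ ≤ C₀ * ((a + √(t - s)) ^ 3)⁻¹ := fun z hz =>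
          (hWbound _ hτ z (hne z hz)).trans <| mul_le_mul_of_nonneg_left
            (rpow_neg_three_le_inv_pow_three ha hz (sqrt_nonneg _)) hC₀.le
        calc _ ≤ C₀ * ((a + √(t - s)) ^ 3)⁻¹ * R₀ * G * (μH[(1:ℝ)] K).toReal :=
              norm_setIntegral_apply_sub_le_of_integral_eq_zero hK.measurableSet hH hKR
                (fun z hz => hWdiff _ hτ z (hne z hz)) hkernel (by linarith)
                (hgmeas.comp measurable_prodMk_right).aestronglyMeasurable
                (fun y hy => hgbdd y hy s hs) (hgmean s hs)
          _ = _ := by ring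
    _ = _ := by
        rw [ha_def]
        field_simp

/-- **Improved decay of boundary layer potentials with zero spatial mean in two dimensions**
(proof of the remainder estimate (1.14)/(5.16)): if the kernel `W` satisfies
`|∇_z W(z,τ)| ≤ C₀(|z| + √τ)^{-3}` and the density `g` on `K ⊆ {|y| ≤ R₀}` has zero spatial
mean, then for `|x| ≥ 2R₀` the layer potential is bounded by
`2 C₀ R₀ H¹(K) (sup |g|) / |x|`. -/
theorem layer_potential_zero_mean_decay_2d
    (R₀ : ℝ) (hR₀ : 0 < R₀) (K : Set (Euc 2)) (hK : IsCompact K)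
    (hKR : ∀ y ∈ K, ‖y‖ ≤ R₀) (hH : μH[(1:ℝ)] K < ⊤)
    (C₀ : ℝ) (hC₀ : 0 < C₀)
    (W : Euc 2 → ℝ → (Euc 2 →L[ℝ] Euc 2))
    (hWdiff : ∀ τ : ℝ, 0 < τ → ∀ z : Euc 2, z ≠ 0 → DifferentiableAt ℝ (fun z' => W z' τ) z)
    (hWcont : ∀ τ : ℝ, 0 < τ →
      ContinuousOn (fun z => fderiv ℝ (fun z' => W z' τ) z) {(0 : Euc 2)}ᶜ)
    (hWbound : ∀ τ : ℝ, 0 < τ → ∀ z : Euc 2, z ≠ 0 →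
      ‖fderiv ℝ (fun z' => W z' τ) z‖ ≤ C₀ * (‖z‖ + Real.sqrt τ) ^ (-(3:ℝ)))
    (t : ℝ) (ht : 0 < t) (g : Euc 2 → ℝ → Euc 2)
    (hgmeas : Measurable (fun pt : Euc 2 × ℝ => g pt.1 pt.2))
    (G : ℝ) (hgbdd : ∀ y ∈ K, ∀ s ∈ Set.Ioo (0:ℝ) t, ‖g y s‖ ≤ G)
    (hgmean : ∀ s ∈ Set.Ioo (0:ℝ) t, ∫ y in K, g y s ∂(μH[(1:ℝ)]) = 0)
    (x : Euc 2) (hx : 2 * R₀ ≤ ‖x‖) :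
    ‖∫ s in Set.Ioo (0:ℝ) t, (∫ y in K, (W (x - y) (t - s)) (g y s) ∂(μH[(1:ℝ)])) ∂volume‖
      ≤ 2 * C₀ * R₀ * (μH[(1:ℝ)] K).toReal * G / ‖x‖ :=
  layer_potential_zero_mean_decay_2d_general R₀ hR₀ K hK hKR hH C₀ hC₀ W hWdiff hWbound t ht g
    hgmeas G hgbdd hgmean x hx
end
end
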